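/- arXiv:2602.23227 — 4 statements merged into one kernel-verified Lean document; each statement's English description precedes it below -/
import Mathlib

section
/- If vertices u and v of a graph H have the same closed neighborhood, then for every graph F, the F-degree of u in H equals the F-degree of v in H. -/
/-- The `F`-degree of a vertex `v` in a graph `G`: the number of subgraphs of `G`
isomorphic to `F` that contain `v`. -/
noncomputable def Fdeg {V W : Type*} (G : SimpleGraph V) (F : SimpleGraph W) (v : V) : ℕ :=
  {H : G.Subgraph | Nonempty (H.coe ≃g F) ∧ v ∈ H.verts}.ncard

open SimpleGraph

/-- A subgraph is isomorphic to its image under a graph isomorphism. -/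
noncomputable def Subgraph.coeIsoMap {V : Type*} {G : SimpleGraph V} (e : G ≃g G)
    (K : G.Subgraph) : K.coe ≃g (K.map e.toHom).coe where
  toEquiv := (e.toEquiv.image K.verts).trans (Equiv.setCongr (by simp [Subgraph.map]))
  map_rel_iff' := by
    rintro ⟨a, ha⟩ ⟨b, hb⟩
    show (K.map e.toHom).Adj (e a) (e b) ↔ K.Adj a b
    simp only [Subgraph.map_adj, Relation.Map]
    constructor
    · rintro ⟨x, y, hxy, hx, hy⟩
      have hx' : x = a := e.toEquiv.injective hx
      have hy' : y = b := e.toEquiv.injective hy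
      subst hx'; subst hy'; exact hxy
    · intro hab
      exact ⟨a, b, hab, rfl, rfl⟩

theorem Fdeg_eq_of_closed_neighborhood_eq {V : Type*} (H : SimpleGraph V) (u v : V)
    (h : insert u (H.neighborSet u) = insert v (H.neighborSet v))
    {W : Type*} (F : SimpleGraph W) : Fdeg H F u = Fdeg H F v := by
  classical
  have hAdj : ∀ x, x ≠ u → x ≠ v → (H.Adj u x ↔ H.Adj v x) := by
    intro x hxu hxv
    have hx : x ∈ insert u (H.neighborSet u) ↔ x ∈ insert v (H.neighborSet v) := by rw [h]
    simpa [Set.mem_insert_iff, hxu, hxv] using hx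
  set σ := Equiv.swap u v with hσ
  have hσu : σ u = v := Equiv.swap_apply_left u v
  have hσv : σ v = u := Equiv.swap_apply_right u v
  have hσo : ∀ x, x ≠ u → x ≠ v → σ x = x := fun x h1 h2 =>
    Equiv.swap_apply_of_ne_of_ne h1 h2
  have key : ∀ a b, H.Adj a b → H.Adj (σ a) (σ b) := by
    intro a b hab
    rcases eq_or_ne a u with hau | hau
    · have hbu : b ≠ u := fun hb => hab.ne (hau.trans hb.symm)
      rcases eq_or_ne b v with hbv | hbv
      · rw [hau, hbv, hσu, hσv]
        exact ((hau ▸ hbv ▸ hab) : H.Adj u v).symm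
      · rw [hau, hσu, hσo b hbu hbv]
        exact (hAdj b hbu hbv).mp (hau ▸ hab)
    · rcases eq_or_ne a v with hav | hav
      · have hbv : b ≠ v := fun hb => hab.ne (hav.trans hb.symm)
        rcases eq_or_ne b u with hbu | hbu
        · rw [hav, hbu, hσv, hσu]
          exact ((hav ▸ hbu ▸ hab) : H.Adj v u).symm
        · rw [hav, hσv, hσo b hbu hbv]
          exact (hAdj b hbu hbv).mpr (hav ▸ hab)
      · rcases eq_or_ne b u with hbu | hbu
        · rw [hbu, hσu, hσo a hau hav]
          exact ((hAdj a hau hav).mp (hbu ▸ hab).symm).symm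
        · rcases eq_or_ne b v with hbv | hbv
          · rw [hbv, hσv, hσo a hau hav]
            exact ((hAdj a hau hav).mpr (hbv ▸ hab).symm).symm
          · rw [hσo a hau hav, hσo b hbu hbv]; exact hab
  have hswap : ∀ a b, H.Adj (σ a) (σ b) ↔ H.Adj a b := by
    intro a b
    refine ⟨fun h' => ?_, key a b⟩
    have := key _ _ h'
    simpa [hσ, Equiv.swap_apply_self] using this
  let e : H ≃g H := ⟨σ, fun {a b} => hswap a b⟩
  let Φ : H.Subgraph → H.Subgraph := SimpleGraph.Subgraph.map e.toHom
  have hΦΦ : ∀ K, Φ (Φ K) = K := by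
    intro K
    show (K.map e.toHom).map e.toHom = K
    rw [← SimpleGraph.Subgraph.map_comp]
    have heid : (e.toHom.comp e.toHom : H →g H) = Hom.id := by
      ext x
      simp [e, hσ, Equiv.swap_apply_self, Hom.comp]
    rw [heid, SimpleGraph.Subgraph.map_id]
  have hΦinj : Function.Injective Φ := Function.LeftInverse.injective hΦΦ
  have himg : {K : H.Subgraph | Nonempty (K.coe ≃g F) ∧ v ∈ K.verts} =
      Φ '' {K : H.Subgraph | Nonempty (K.coe ≃g F) ∧ u ∈ K.verts} := by
    ext K
    simp only [Set.mem_setOf_eq, Set.mem_image]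
    constructor
    · rintro ⟨⟨iso⟩, hvK⟩
      refine ⟨Φ K, ⟨⟨(Subgraph.coeIsoMap e K).symm.trans iso⟩, ?_⟩, hΦΦ K⟩
      show u ∈ σ '' K.verts
      exact hσv ▸ Set.mem_image_of_mem σ hvK
    · rintro ⟨K, ⟨⟨iso⟩, huK⟩, rfl⟩
      refine ⟨⟨(Subgraph.coeIsoMap e K).symm.trans iso⟩, ?_⟩
      show v ∈ σ '' K.verts
      exact hσu ▸ Set.mem_image_of_mem σ huK
  unfold Fdeg
  rw [himg, Set.ncard_image_of_injective _ hΦinj]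
end

section
/- Let F be a graph of diameter 2 with |F| = n and minimum degree t, let l > n, and let F_{2l} be the graph on {1,...,2l} where distinct i,j ≤ 2l−1 are adjacent iff |i−j| ≤ l−1 and 2l is adjacent exactly to 1,...,t. Then every subgraph Y of F_{2l} isomorphic to F containing the vertex 2l contains all t edges (1,2l), (2,2l), ..., (t,2l), and all vertices of Y lie in {1,...,l+t−1} ∪ {2l}. -/
/-- The graph `F_{2l}` on vertex set `{1, ..., 2l}`: distinct `i, j ≤ 2l-1` are adjacent
iff `|i - j| ≤ l - 1`, and vertex `2l` is adjacent exactly to `1, ..., t`. -/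
def graphF2l (l t : ℕ) : SimpleGraph {v : ℕ // 1 ≤ v ∧ v ≤ 2 * l} :=
  SimpleGraph.fromRel (fun i j =>
    (i.val ≤ 2 * l - 1 ∧ j.val ≤ 2 * l - 1 ∧ |(i.val : ℤ) - (j.val : ℤ)| ≤ (l : ℤ) - 1) ∨
    (i.val = 2 * l ∧ j.val ≤ t))

lemma graphF2l_adj_elim {l t : ℕ} {a b : {v : ℕ // 1 ≤ v ∧ v ≤ 2 * l}}
    (h : (graphF2l l t).Adj a b) :
    a.val ≠ b.val ∧
      ((a.val ≤ 2 * l - 1 ∧ b.val ≤ 2 * l - 1 ∧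
          |(a.val : ℤ) - (b.val : ℤ)| ≤ (l : ℤ) - 1) ∨
        (a.val = 2 * l ∧ b.val ≤ t) ∨ (b.val = 2 * l ∧ a.val ≤ t)) := by
  rw [graphF2l, SimpleGraph.fromRel_adj] at h
  obtain ⟨hne, h⟩ := h
  refine ⟨fun hv => hne (Subtype.ext hv), ?_⟩
  rcases h with (h | h) | (h | h)
  · exact Or.inl ⟨h.1, h.2.1, h.2.2⟩
  · exact Or.inr (Or.inl h)
  · exact Or.inl ⟨h.2.1, h.1, by rw [abs_sub_comm]; exact h.2.2⟩
  · exact Or.inr (Or.inr h)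

theorem subgraphs_containing_last_vertex {W : Type*} [Fintype W] (F : SimpleGraph W)
    [DecidableRel F.Adj] (n t l : ℕ) (hdiam : F.diam = 2) (hcard : Fintype.card W = n)
    (hmin : F.minDegree = t) (hl : n < l)
    (Y : (graphF2l l t).Subgraph) (hY : Nonempty (Y.coe ≃g F))
    (vlast : {v : ℕ // 1 ≤ v ∧ v ≤ 2 * l}) (hvlast : vlast.val = 2 * l)
    (hmem : vlast ∈ Y.verts) :
    (∀ k : {v : ℕ // 1 ≤ v ∧ v ≤ 2 * l}, k.val ≤ t → Y.Adj k vlast) ∧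
      (∀ x ∈ Y.verts, x.val ≤ l + t - 1 ∨ x.val = 2 * l) := by
  classical
  obtain ⟨e⟩ := hY
  set v0 : Y.verts := ⟨vlast, hmem⟩ with hv0
  -- t < n < l
  have ht : t < n := by
    rw [← hmin, ← hcard]
    exact lt_of_le_of_lt (F.minDegree_le_degree (e v0)) (F.degree_lt_card_verts (e v0))
  have htl : t < l := ht.trans hl
  have hl1 : 1 ≤ l := lt_of_le_of_lt (Nat.zero_le n) hl
  -- any Y-neighbor of v0 has value in [1, t]
  have hnbr : ∀ w : Y.verts, Y.coe.Adj v0 w → 1 ≤ (w : ℕ) ∧ (w : ℕ) ≤ t := by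
    intro w hw
    have hadj : (graphF2l l t).Adj vlast w.val := Y.adj_sub hw
    obtain ⟨hne, h⟩ := graphF2l_adj_elim hadj
    refine ⟨w.val.property.1, ?_⟩
    rcases h with h | h | h
    · omega
    · exact h.2
    · omega
  -- the injection from F-neighbors of e v0 into Icc 1 t
  haveI : Fintype {m : ℕ // m ∈ Finset.Icc 1 t} := FinsetCoe.fintype _
  let ψ : (F.neighborSet (e v0)) → (Y.coe.neighborSet v0) := (e.mapNeighborSet v0).symm
  let h : (F.neighborSet (e v0)) → {m : ℕ // m ∈ Finset.Icc 1 t} := fun w =>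
    ⟨((ψ w : Y.verts) : {v : ℕ // 1 ≤ v ∧ v ≤ 2 * l}).val, by
      have := hnbr (ψ w) (ψ w).property
      simp only [Finset.mem_Icc]
      omega⟩
  have hinj : Function.Injective h := by
    intro a b hab
    have h1 := Subtype.ext_iff.mp hab
    have h2 : ψ a = ψ b := by
      apply Subtype.ext; apply Subtype.ext; apply Subtype.ext; exact h1
    exact (e.mapNeighborSet v0).symm.injective h2
  have hcard1 : Fintype.card {m : ℕ // m ∈ Finset.Icc 1 t} = t := by
    rw [Fintype.card_coe, Nat.card_Icc]
    omega
  have hcard2 : t ≤ Fintype.card (F.neighborSet (e v0)) := by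
    rw [F.card_neighborSet_eq_degree]
    exact le_of_eq_of_le hmin.symm (F.minDegree_le_degree (e v0))
  have hbij : Function.Bijective h := by
    refine (Fintype.bijective_iff_injective_and_card h).mpr ⟨hinj, ?_⟩
    have := Fintype.card_le_of_injective h hinj
    omega
  have part1 : ∀ k : {v : ℕ // 1 ≤ v ∧ v ≤ 2 * l}, k.val ≤ t → Y.Adj k vlast := by
    intro k hk
    obtain ⟨w, hw⟩ := hbij.2 ⟨k.val, by
      simp only [Finset.mem_Icc]; exact ⟨k.property.1, hk⟩⟩
    have hval := Subtype.ext_iff.mp hw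
    have hkeq : ((ψ w : Y.verts) : {v : ℕ // 1 ≤ v ∧ v ≤ 2 * l}) = k := Subtype.ext hval
    have hadj : Y.coe.Adj v0 (ψ w) := (ψ w).property
    have hY2 : Y.Adj vlast ((ψ w : Y.verts) : {v : ℕ // 1 ≤ v ∧ v ≤ 2 * l}) := hadj
    rw [hkeq] at hY2
    exact hY2.symm
  refine ⟨part1, ?_⟩
  intro x hx
  by_contra hcon
  push_neg at hcon
  obtain ⟨hx1, hx2⟩ := hcon
  have hxrange : l + t ≤ x.val ∧ x.val ≤ 2 * l - 1 := by
    have := x.property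
    omega
  have key : ∀ (a b : Y.verts) (q : Y.coe.Walk a b), (a : ℕ) = (x : ℕ) →
      (b : ℕ) = 2 * l → q.length ≤ 2 → False := by
    intro a b q
    cases q with
    | nil =>
      intro ha hb _
      omega
    | cons hadj q' =>
      rename_i w
      intro ha hb hlen
      cases q' with
      | nil =>
        obtain ⟨hne', hcl⟩ := graphF2l_adj_elim (Y.adj_sub hadj)
        rcases hcl with h' | h' | h'
        · obtain ⟨h1', h2', habs⟩ := h'
          rw [abs_le] at habs
          omega
        · omega
        · omega
      | cons hadj2 q'' =>
        cases q'' with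
        | nil =>
          have hwt : (w : ℕ) ≤ t := by
            obtain ⟨hne', hcl⟩ := graphF2l_adj_elim (Y.adj_sub hadj2)
            rcases hcl with h' | h' | h'
            · omega
            · omega
            · omega
          obtain ⟨hne', hcl⟩ := graphF2l_adj_elim (Y.adj_sub hadj)
          rcases hcl with h' | h' | h'
          · obtain ⟨h1', h2', habs⟩ := h'
            rw [abs_le] at habs
            omega
          · omega
          · omega
        | cons _ _ =>
          simp [SimpleGraph.Walk.length_cons] at hlen
  set xv : Y.verts := ⟨x, hx⟩ with hxv
  have hxvne : xv ≠ v0 := by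
    intro hh
    have h' : (x : ℕ) = (vlast : ℕ) :=
      congrArg (fun z : Y.verts => ((z : {v : ℕ // 1 ≤ v ∧ v ≤ 2 * l}) : ℕ)) hh
    omega
  have hne : e xv ≠ e v0 := fun hh => hxvne (e.injective hh)
  have hediam : F.ediam ≠ ⊤ := F.ediam_ne_top_of_diam_ne_zero (by omega)
  have hreach : F.Reachable (e xv) (e v0) :=
    SimpleGraph.reachable_of_edist_ne_top
      (lt_of_le_of_lt (SimpleGraph.edist_le_ediam) (lt_top_iff_ne_top.mpr hediam)).ne
  obtain ⟨p, hp⟩ := hreach.exists_walk_length_eq_dist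
  have hplen : p.length ≤ 2 :=
    hp ▸ (le_of_le_of_eq (SimpleGraph.dist_le_diam hediam) hdiam)
  let q : Y.coe.Walk xv v0 :=
    (p.map e.symm.toHom).copy (e.symm_apply_apply xv) (e.symm_apply_apply v0)
  have hqlen : q.length ≤ 2 := by
    simpa [q, SimpleGraph.Walk.length_copy, SimpleGraph.Walk.length_map] using hplen
  exact key xv v0 q rfl hvlast hqlen
end

section
/- Let l > n ≥ 3, fix i ∈ {1,...,l−1}, and let A be the graph on {1,...,2l−1} with distinct u,v adjacent iff |u−v| ≤ l−1. For any connected graph F on n vertices, the number of subgraphs of A isomorphic to F that contain the edge (i+1, l+i) and avoid vertex i is at least C(l−2, n−2). -/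
/-!
All vertices of `A` with labels in `{i+1, ..., l+i}` are pairwise adjacent, so this set `K`
of `l` vertices is a clique containing `i+1` and `l+i` but not `i`. Fix an edge `ab` of `F`
(it exists because `F` is connected with at least two vertices). For each of the
`C(l-2, n-2)` choices of `n-2` further vertices of `K`, any bijection from `F` onto those
vertices together with `i+1` and `l+i` that sends `a ↦ i+1` and `b ↦ l+i` is a graph
embedding into the clique; distinct choices give subgraphs with distinct vertex sets.
-/

/-- The graph `A_{2l-1}` on vertex set `{1, ..., 2l-1}`, where distinct `i, j`
are adjacent iff `|i - j| ≤ l - 1`. -/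
def graphA (l : ℕ) : SimpleGraph {v : ℕ // 1 ≤ v ∧ v ≤ 2 * l - 1} :=
  SimpleGraph.fromRel (fun i j => |(i.val : ℤ) - (j.val : ℤ)| ≤ (l : ℤ) - 1)

theorem Equiv.exists_apply_eq_and_apply_eq {α β : Type*} (e₀ : α ≃ β) {a b : α} (hab : a ≠ b)
    {x y : β} (hxy : x ≠ y) : ∃ e : α ≃ β, e a = x ∧ e b = y := by
  classical
  let e₁ := e₀.trans (Equiv.swap (e₀ a) x)
  have he₁ : e₁ a = x := Equiv.swap_apply_left _ _
  refine ⟨e₁.trans (Equiv.swap (e₁ b) y), ?_, Equiv.swap_apply_left _ _⟩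
  have hb : e₁ b ≠ x := he₁ ▸ e₁.injective.ne hab.symm
  simp only [Equiv.trans_apply, he₁]
  exact Equiv.swap_apply_of_ne_of_ne hb.symm hxy

namespace Finset

variable {α : Type*} [DecidableEq α]

theorem insert_insert_mem_powersetCard {K S : Finset α} {x y : α} {k : ℕ} (hx : x ∈ K)
    (hy : y ∈ K) (hxy : x ≠ y) (hS : S ∈ ((K.erase x).erase y).powersetCard k) :
    insert x (insert y S) ∈ K.powersetCard (k + 2) := by
  obtain ⟨hSK, rfl⟩ := mem_powersetCard.mp hS
  have hyS : y ∉ S := fun h ↦ by simpa using hSK h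
  have hxS : x ∉ insert y S := by
    simp only [mem_insert, not_or]
    exact ⟨hxy, fun h ↦ by simpa using (mem_erase.mp (hSK h)).2⟩
  refine mem_powersetCard.mpr ⟨?_, by rw [card_insert_of_notMem hxS, card_insert_of_notMem hyS]⟩
  exact insert_subset hx <| insert_subset hy <|
    hSK.trans ((erase_subset _ _).trans (erase_subset _ _))

theorem erase_erase_insert_insert {S : Finset α} {x y : α} (hx : x ∉ S) (hy : y ∉ S) :
    ((insert x (insert y S)).erase x).erase y = S := by
  rw [erase_insert_eq_erase, erase_right_comm, erase_insert_eq_erase, erase_eq_of_notMem hy,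
    erase_eq_of_notMem hx]

end Finset

namespace SimpleGraph

variable {V W : Type*} {G : SimpleGraph V} {F : SimpleGraph W}

theorem Connected.exists_adj [Nontrivial V] (h : G.Connected) : ∃ a b, G.Adj a b :=
  have ⟨a⟩ := h.nonempty
  ⟨a, h.preconnected.exists_adj_of_nontrivial a⟩

def IsClique.copy {s : Set V} (hs : G.IsClique s) (f : W ↪ V) (hf : ∀ w, f w ∈ s) :
    Copy F G :=
  ⟨⟨f, fun h ↦ hs (hf _) (hf _) (f.injective.ne h.ne)⟩, f.injective⟩

theorem IsClique.exists_subgraph_iso_adj_verts_eq [Fintype W] {s : Finset V}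
    (hs : G.IsClique (s : Set V)) (hcard : s.card = Fintype.card W) {a b : W} (hab : F.Adj a b)
    {x y : V} (hx : x ∈ s) (hy : y ∈ s) (hxy : x ≠ y) :
    ∃ H : G.Subgraph, Nonempty (H.coe ≃g F) ∧ H.Adj x y ∧ H.verts = s := by
  obtain ⟨e, hea, heb⟩ := (Fintype.equivOfCardEq (by simp [hcard]) : W ≃ s)
    |>.exists_apply_eq_and_apply_eq hab.ne (x := ⟨x, hx⟩) (y := ⟨y, hy⟩) (by simpa using hxy)
  let f : Copy F G :=
    hs.copy (e.toEmbedding.trans (Function.Embedding.subtype _)) fun w ↦ (e w).2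
  refine ⟨f.toSubgraph, ⟨f.isoToSubgraph.symm⟩, ?_, ?_⟩
  · exact ⟨a, b, hab, congrArg Subtype.val hea, congrArg Subtype.val heb⟩
  · ext v
    simp only [Subgraph.map_verts, Set.image_univ, Subgraph.verts_top, Set.mem_range]
    exact ⟨fun ⟨w, hw⟩ ↦ hw ▸ (e w).2, fun hv ↦ ⟨e.symm ⟨v, hv⟩, by simp [f, IsClique.copy]⟩⟩

theorem choose_le_ncard_subgraphs_iso_adj_of_isClique [Finite V] [Fintype W] {K : Finset V}
    (hK : G.IsClique (K : Set V)) {a b : W} (hab : F.Adj a b) {x y : V} (hx : x ∈ K)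
    (hy : y ∈ K) (hxy : x ≠ y) :
    (K.card - 2).choose (Fintype.card W - 2) ≤
      {H : G.Subgraph | Nonempty (H.coe ≃g F) ∧ H.Adj x y ∧ H.verts ⊆ K}.ncard := by
  classical
  set P := ((K.erase x).erase y).powersetCard (Fintype.card W - 2)
  have hW : 2 ≤ Fintype.card W := by
    simpa [Finset.card_pair hab.ne] using Finset.card_le_univ ({a, b} : Finset W)
  have hmem (S : P) :
      insert x (insert y S.1) ⊆ K ∧ (insert x (insert y S.1)).card = Fintype.card W :=
    Finset.mem_powersetCard.mp <| by
      simpa [Nat.sub_add_cancel hW] using Finset.insert_insert_mem_powersetCard hx hy hxy S.2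
  have hnotMem (S : P) : x ∉ S.1 ∧ y ∉ S.1 := by
    have hSK := (Finset.mem_powersetCard.mp S.2).1
    exact ⟨fun h ↦ by simpa using hSK h, fun h ↦ by simpa using hSK h⟩
  choose g hg using fun S : P ↦ (hK.subset (hmem S).1).exists_subgraph_iso_adj_verts_eq
    (hmem S).2 hab (by simp) (by simp) hxy
  have hg_inj : Function.Injective g := by
    intro S T hST
    have hverts : insert x (insert y S.1) = insert x (insert y T.1) :=
      Finset.coe_injective ((hg S).2.2.symm.trans (hST ▸ (hg T).2.2))
    apply Subtype.ext
    rw [← Finset.erase_erase_insert_insert (hnotMem S).1 (hnotMem S).2, hverts,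
      Finset.erase_erase_insert_insert (hnotMem T).1 (hnotMem T).2]
  let t := {H : G.Subgraph | Nonempty (H.coe ≃g F) ∧ H.Adj x y ∧ H.verts ⊆ K}
  have hgt (S : P) : g S ∈ t :=
    ⟨(hg S).1, (hg S).2.1,
      (hg S).2.2.trans_subset (Finset.coe_subset.mpr (hmem S).1)⟩
  calc (K.card - 2).choose (Fintype.card W - 2) = Nat.card P := by
        rw [Nat.card_eq_finsetCard, Finset.card_powersetCard, Finset.card_erase_of_mem
          (Finset.mem_erase.mpr ⟨hxy.symm, hy⟩), Finset.card_erase_of_mem hx]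
        rfl
    _ ≤ Nat.card t := Nat.card_le_card_of_injective (fun S ↦ ⟨g S, hgt S⟩)
        fun S T h ↦ hg_inj (congrArg Subtype.val h)
    _ = t.ncard := Nat.card_coe_set_eq t

end SimpleGraph

theorem isClique_graphA {l m : ℕ} {s : Set {v : ℕ // 1 ≤ v ∧ v ≤ 2 * l - 1}}
    (hs : ∀ v ∈ s, m ≤ v.val ∧ v.val < m + l) : (graphA l).IsClique s := by
  intro v hv w hw hne
  have := hs v hv
  have := hs w hw
  simp only [graphA, SimpleGraph.fromRel_adj]
  exact ⟨hne, Or.inl (abs_le.mpr ⟨by omega, by omega⟩)⟩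

theorem count_special_subgraphs_general {W : Type*} [Fintype W] (F : SimpleGraph W)
    (n l i : ℕ) (hn : 3 ≤ n)
    (hcard : Fintype.card W = n) (hconn : F.Connected)
    (u u' w : {v : ℕ // 1 ≤ v ∧ v ≤ 2 * l - 1})
    (hu : u.val = i) (hu' : u'.val = i + 1) (hw : w.val = l + i) :
    Nat.choose (l - 2) (n - 2) ≤
      {H : (graphA l).Subgraph | Nonempty (H.coe ≃g F) ∧ H.Adj u' w ∧
        u ∉ H.verts}.ncard := by
  classical
  have : Finite {v : ℕ // 1 ≤ v ∧ v ≤ 2 * l - 1} := (Set.finite_Icc 1 (2 * l - 1)).to_subtype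
  have : Nontrivial W := Fintype.one_lt_card_iff_nontrivial.mp (by omega)
  obtain ⟨a, b, hab⟩ := hconn.exists_adj
  obtain ⟨hi, -⟩ := u.2
  obtain ⟨-, hli⟩ := w.2
  let K := (Finset.Icc (i + 1) (l + i)).subtype (fun v ↦ 1 ≤ v ∧ v ≤ 2 * l - 1)
  have hmemK : ∀ v, v ∈ K ↔ i + 1 ≤ v.val ∧ v.val ≤ l + i := fun v ↦ by
    simp [K, Finset.mem_subtype]
  have hK : K.card = l := by
    rw [Finset.card_subtype,
      Finset.filter_true_of_mem fun v hv ↦ by have := Finset.mem_Icc.mp hv; omega, Nat.card_Icc]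
    omega
  have hKclique : (graphA l).IsClique (K : Set _) :=
    isClique_graphA (m := i + 1) fun v hv ↦ by have := (hmemK v).mp hv; omega
  calc (l - 2).choose (n - 2)
      = (K.card - 2).choose (Fintype.card W - 2) := by rw [hK, hcard]
    _ ≤ {H : (graphA l).Subgraph | Nonempty (H.coe ≃g F) ∧ H.Adj u' w ∧ H.verts ⊆ K}.ncard :=
      SimpleGraph.choose_le_ncard_subgraphs_iso_adj_of_isClique hKclique hab
        ((hmemK _).mpr (by omega)) ((hmemK _).mpr (by omega))
        fun h ↦ by have := congrArg Subtype.val h; omega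
    _ ≤ _ := Set.ncard_le_ncard fun H hH ↦ show _ ∧ _ ∧ _ from
      ⟨hH.1, hH.2.1, fun hmem ↦ by have := (hmemK u).mp (hH.2.2 hmem); omega⟩

theorem count_special_subgraphs {W : Type*} [Fintype W] (F : SimpleGraph W)
    (n l i : ℕ) (hn : 3 ≤ n) (hl : n < l) (hi1 : 1 ≤ i) (hi2 : i ≤ l - 1)
    (hcard : Fintype.card W = n) (hconn : F.Connected)
    (u u' w : {v : ℕ // 1 ≤ v ∧ v ≤ 2 * l - 1})
    (hu : u.val = i) (hu' : u'.val = i + 1) (hw : w.val = l + i) :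
    Nat.choose (l - 2) (n - 2) ≤
      {H : (graphA l).Subgraph | Nonempty (H.coe ≃g F) ∧ H.Adj u' w ∧
        u ∉ H.verts}.ncard :=
  count_special_subgraphs_general F n l i hn hcard hconn u u' w hu hu' hw
end

section
/- Let l > n ≥ 3 and let A be the graph on {1,...,2l−1} with distinct u,v adjacent iff |u−v| ≤ l−1. For any graph F of diameter 2 on n vertices and any i ∈ {1,...,l−1}, the F-degree of vertex i+1 in A exceeds the F-degree of vertex i in A by at least C(l−2, n−2); in particular the F-degrees z_1 < z_2 < ... < z_l of vertices 1 through l are strictly increasing. -/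
open SimpleGraph

namespace SimpleGraph.Subgraph

variable {V : Type*} {G : SimpleGraph V}

def relabel (H : G.Subgraph) (σ : V ≃ V) (h : ∀ x y, H.Adj x y → G.Adj (σ x) (σ y)) :
    G.Subgraph where
  verts := σ.symm ⁻¹' H.verts
  Adj x y := H.Adj (σ.symm x) (σ.symm y)
  adj_sub hxy := by simpa using h _ _ hxy
  edge_vert hxy := H.edge_vert hxy
  symm := ⟨fun _ _ hxy => H.adj_symm hxy⟩

variable {H H' : G.Subgraph} {σ : V ≃ V} {h : ∀ x y, H.Adj x y → G.Adj (σ x) (σ y)}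

@[simp] lemma mem_relabel_verts {x : V} : x ∈ (H.relabel σ h).verts ↔ σ.symm x ∈ H.verts :=
  Iff.rfl

@[simp] lemma relabel_adj {x y : V} : (H.relabel σ h).Adj x y ↔ H.Adj (σ.symm x) (σ.symm y) :=
  Iff.rfl

def relabelIso (H : G.Subgraph) (σ : V ≃ V) (h : ∀ x y, H.Adj x y → G.Adj (σ x) (σ y)) :
    (H.relabel σ h).coe ≃g H.coe where
  toFun x := ⟨σ.symm x, x.2⟩
  invFun p := ⟨σ p, by simp [p.2]⟩
  left_inv x := by simp
  right_inv p := by simp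
  map_rel_iff' := Iff.rfl

lemma relabel_inj {h' : ∀ x y, H'.Adj x y → G.Adj (σ x) (σ y)} :
    H.relabel σ h = H'.relabel σ h' ↔ H = H' := by
  refine ⟨fun heq => ?_, fun heq => by subst heq; rfl⟩
  ext x
  · simpa using congrArg (σ x ∈ ·.verts) heq
  · rename_i y
    simpa using congrArg (·.Adj (σ x) (σ y)) heq

end SimpleGraph.Subgraph

section FDegree

variable {V W : Type*} {G : SimpleGraph V} {u u' : V}

lemma adj_swap_of_neighbor_subset [DecidableEq V]
    (hN : ∀ w, G.Adj u w → w ≠ u' → G.Adj u' w) {x y : V} (hx : x ≠ u') (hy : y ≠ u')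
    (hxy : G.Adj x y) :
    G.Adj (Equiv.swap u u' x) (Equiv.swap u u' y) := by
  by_cases hxu : x = u <;> by_cases hyu : y = u
  · exact absurd (hxu.trans hyu.symm) hxy.ne
  · rw [hxu, Equiv.swap_apply_left, Equiv.swap_apply_of_ne_of_ne hyu hy]
    exact hN y (hxu ▸ hxy) hy
  · rw [hyu, Equiv.swap_apply_left, Equiv.swap_apply_of_ne_of_ne hxu hx]
    exact (hN x (hyu ▸ hxy.symm) hx).symm
  · rwa [Equiv.swap_apply_of_ne_of_ne hxu hx, Equiv.swap_apply_of_ne_of_ne hyu hy]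

theorem Fdeg_add_ncard_le_Fdeg [Finite V] (F : SimpleGraph W)
    (hN : ∀ w, G.Adj u w → w ≠ u' → G.Adj u' w) :
    Fdeg G F u + {H : G.Subgraph | Nonempty (H.coe ≃g F) ∧ u ∉ H.verts ∧
      ∃ w, H.Adj u' w ∧ ¬ G.Adj u w}.ncard ≤ Fdeg G F u' := by
  classical
  set T := {H : G.Subgraph | Nonempty (H.coe ≃g F) ∧ u ∉ H.verts ∧
      ∃ w, H.Adj u' w ∧ ¬ G.Adj u w}
  set τ := Equiv.swap u u'
  have hτ : ∀ H : G.Subgraph, u' ∉ H.verts → ∀ x y, H.Adj x y → G.Adj (τ x) (τ y) :=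
    fun H hH x y hxy => adj_swap_of_neighbor_subset hN (fun h => hH (h ▸ H.edge_vert hxy))
      (fun h => hH (h ▸ H.edge_vert hxy.symm)) (H.adj_sub hxy)
  let Ψ : G.Subgraph → G.Subgraph := fun H =>
    if h : u' ∈ H.verts then H else H.relabel τ (hτ H h)
  have hT : T ⊆ {H | Nonempty (H.coe ≃g F) ∧ u' ∈ H.verts} :=
    fun H ⟨hF, _, _, hw, _⟩ => ⟨hF, H.edge_vert hw⟩
  have hmaps : Set.MapsTo Ψ {H | Nonempty (H.coe ≃g F) ∧ u ∈ H.verts}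
      ({H | Nonempty (H.coe ≃g F) ∧ u' ∈ H.verts} \ T) := by
    rintro H ⟨⟨e⟩, hu⟩
    by_cases h : u' ∈ H.verts
    · simp only [Ψ, dif_pos h]
      exact ⟨⟨⟨e⟩, h⟩, fun hT => hT.2.1 hu⟩
    · simp only [Ψ, dif_neg h]
      refine ⟨⟨⟨(H.relabelIso τ _).trans e⟩, by simpa [τ] using hu⟩, ?_⟩
      rintro ⟨-, hu, w, huw, hGuw⟩
      have hwu : w ≠ u := fun hw => hu (hw ▸ (H.relabel τ _).edge_vert huw.symm)
      have hwu' : w ≠ u' := (H.relabel τ _).adj_sub huw |>.ne'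
      simp only [Subgraph.relabel_adj, τ, Equiv.symm_swap, Equiv.swap_apply_right,
        Equiv.swap_apply_of_ne_of_ne hwu hwu'] at huw
      exact hGuw (H.adj_sub huw)
  have hinj : Set.InjOn Ψ {H | Nonempty (H.coe ≃g F) ∧ u ∈ H.verts} := by
    rintro H ⟨-, hu⟩ H' ⟨-, hu'⟩ heq
    by_cases h : u' ∈ H.verts <;> by_cases h' : u' ∈ H'.verts <;>
      simp only [Ψ, dif_pos, dif_neg, h, h', not_false_eq_true, Subgraph.relabel_inj] at heq
    · exact heq
    · exact absurd (heq ▸ hu) (by simpa [τ] using h')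
    · exact absurd (heq ▸ hu') (by simpa [τ] using h)
    · exact heq
  have := Set.ncard_le_ncard_of_injOn Ψ hmaps hinj (Set.toFinite _)
  rw [Set.ncard_sdiff hT] at this
  have := Set.ncard_le_ncard hT
  unfold Fdeg
  omega

theorem exists_iso_subgraph_verts_eq_of_isClique [Fintype W] {F : SimpleGraph W} {t : Finset V}
    (ht : G.IsClique (t : Set V)) (hcard : Fintype.card W = t.card) {a₀ b₀ : W}
    (hF : F.Adj a₀ b₀) {a b : V} (ha : a ∈ t) (hb : b ∈ t) (hab : a ≠ b) :
    ∃ H : G.Subgraph, Nonempty (H.coe ≃g F) ∧ H.verts = t ∧ H.Adj a b := by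
  classical
  obtain ⟨g, hg⟩ := Finset.exists_equiv_extend_of_card_eq hcard (s := {a₀, b₀})
    (f := fun w => if w = a₀ then a else b) (by simp [Finset.insert_subset_iff, ha, hb, hF.ne'])
    (by simp [Set.InjOn, hab, hF.ne', Ne.symm hab])
  let c : Copy F G := ⟨⟨fun w => g w, fun hxy =>
    ht (g _).2 (g _).2 fun h => hxy.ne (g.injective (Subtype.ext h))⟩,
    fun _ _ h => g.injective (Subtype.ext h)⟩
  refine ⟨c.toSubgraph, ⟨c.isoToSubgraph.symm⟩, ?_, ?_⟩
  · ext x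
    exact ⟨fun ⟨y, _, hy⟩ => hy ▸ (g y).2,
      fun hx => ⟨g.symm ⟨x, hx⟩, trivial, by simp [c]⟩⟩
  · exact ⟨a₀, b₀, hF, (hg a₀ (by simp)).trans (if_pos rfl),
      (hg b₀ (by simp)).trans (if_neg hF.ne')⟩

theorem choose_le_ncard_of_isClique [Finite V] [Fintype W] {F : SimpleGraph W} {K : Finset V}
    (hK : G.IsClique (K : Set V)) {a b : V} (ha : a ∈ K) (hb : b ∈ K) (hab : a ≠ b)
    {a₀ b₀ : W} (hF : F.Adj a₀ b₀) :
    (K.card - 2).choose (Fintype.card W - 2) ≤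
      {H : G.Subgraph | Nonempty (H.coe ≃g F) ∧ H.verts ⊆ K ∧ H.Adj a b}.ncard := by
  classical
  have hW : 1 < Fintype.card W := Fintype.one_lt_card_iff.mpr ⟨a₀, b₀, hF.ne⟩
  set P := Finset.powersetCard (Fintype.card W - 2) ((K.erase a).erase b)
  have hP : ∀ s ∈ P, a ∉ s ∧ b ∉ s ∧ insert a (insert b s) ⊆ K ∧
      (insert a (insert b s)).card = Fintype.card W := by
    intro s hs
    obtain ⟨hsK, hs⟩ := Finset.mem_powersetCard.mp hs
    have has : a ∉ s := fun h => by simpa using hsK h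
    have hbs : b ∉ s := fun h => by simpa using hsK h
    refine ⟨has, hbs, Finset.insert_subset ha (Finset.insert_subset hb
      (hsK.trans ((Finset.erase_subset _ _).trans (Finset.erase_subset _ _)))), ?_⟩
    rw [Finset.card_insert_of_notMem (by simp [hab, has]), Finset.card_insert_of_notMem hbs, hs]
    omega
  choose! H hHiso hHverts hHadj using fun s hs =>
    exists_iso_subgraph_verts_eq_of_isClique (G := G) (F := F)
      (hK.subset (Finset.coe_subset.mpr (hP s hs).2.2.1)) (hP s hs).2.2.2.symm hF
      (Finset.mem_insert_self a _) (Finset.mem_insert_of_mem (Finset.mem_insert_self b s)) hab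
  have hinj : Set.InjOn H P := by
    intro s hs t ht hst
    have hv := Finset.coe_inj.mp
      ((hHverts s hs).symm.trans ((congrArg _ hst).trans (hHverts t ht)))
    have := congrArg (fun r => (r.erase a).erase b) hv
    rwa [Finset.erase_insert (by simp [hab, (hP s hs).1]), Finset.erase_insert (hP s hs).2.1,
      Finset.erase_insert (by simp [hab, (hP t ht).1]), Finset.erase_insert (hP t ht).2.1] at this
  calc (K.card - 2).choose (Fintype.card W - 2) = (P : Set (Finset V)).ncard := by
        rw [Set.ncard_coe_finset, Finset.card_powersetCard, Finset.card_erase_of_mem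
          (Finset.mem_erase.mpr ⟨hab.symm, hb⟩), Finset.card_erase_of_mem ha]
        rfl
    _ ≤ _ := by
        refine Set.ncard_le_ncard_of_injOn H (fun s hs => ⟨hHiso s hs, ?_, hHadj s hs⟩) hinj
          (Set.toFinite _)
        exact (hHverts s hs).trans_subset (Finset.coe_subset.mpr (hP s hs).2.2.1)

end FDegree

section GraphA

variable {l : ℕ}

instance : Finite {v : ℕ // 1 ≤ v ∧ v ≤ 2 * l - 1} :=
  (Set.finite_Icc 1 (2 * l - 1)).to_subtype

lemma graphA_adj {x y : {v : ℕ // 1 ≤ v ∧ v ≤ 2 * l - 1}} :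
    (graphA l).Adj x y ↔ x.val ≠ y.val ∧ |(x.val : ℤ) - y.val| ≤ l - 1 := by
  simp [graphA, abs_sub_comm, Subtype.ext_iff]

lemma graphA_adj_of_adj_pred {u u' w : {v : ℕ // 1 ≤ v ∧ v ≤ 2 * l - 1}}
    (hu' : u'.val = u.val + 1) (hul : u'.val ≤ l) (huw : (graphA l).Adj u w) (hw : w ≠ u') :
    (graphA l).Adj u' w := by
  have := w.2.1
  have := Subtype.ext_iff.not.mp hw
  rw [graphA_adj, abs_le] at huw ⊢
  omega

lemma isClique_graphA_window (m : ℕ) :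
    (graphA l).IsClique {v | m ≤ v.val ∧ v.val < m + l} := by
  intro x hx y hy hxy
  rw [graphA_adj, abs_le]
  have := Subtype.ext_iff.not.mp hxy
  simp only [Set.mem_ofPred_eq] at hx hy
  omega

theorem Fdeg_graphA_add_choose_le {W : Type*} [Fintype W] (F : SimpleGraph W) {a₀ b₀ : W}
    (hF : F.Adj a₀ b₀) (u u' : {v : ℕ // 1 ≤ v ∧ v ≤ 2 * l - 1}) (hul : u.val ≤ l - 1)
    (hu' : u'.val = u.val + 1) :
    Fdeg (graphA l) F u + (l - 2).choose (Fintype.card W - 2) ≤ Fdeg (graphA l) F u' := by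
  have := u.2.1
  let v : {v : ℕ // 1 ≤ v ∧ v ≤ 2 * l - 1} := ⟨u.val + l, by omega, by omega⟩
  have hv : v.val = u.val + l := rfl
  let K := (Finset.Icc (u.val + 1) (u.val + l)).subtype (fun v => 1 ≤ v ∧ v ≤ 2 * l - 1)
  have hK : ∀ x, x ∈ K ↔ u.val + 1 ≤ x.val ∧ x.val < u.val + 1 + l := fun x => by
    simp only [K, Finset.mem_subtype, Finset.mem_Icc]
    omega
  have hKcard : K.card = l := by
    rw [Finset.card_subtype, Finset.filter_true_of_mem fun x hx => ?_, Nat.card_Icc]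
    · omega
    · simp only [Finset.mem_Icc] at hx
      omega
  calc Fdeg (graphA l) F u + (l - 2).choose (Fintype.card W - 2)
      ≤ Fdeg (graphA l) F u + {H : (graphA l).Subgraph | Nonempty (H.coe ≃g F) ∧
          H.verts ⊆ K ∧ H.Adj u' v}.ncard := by
        have hclique := choose_le_ncard_of_isClique (F := F)
          ((isClique_graphA_window _).subset fun x hx => (hK x).mp hx)
          (a := u') (b := v) ((hK _).mpr (by omega)) ((hK _).mpr (by omega))
          (fun h => by have := congrArg Subtype.val h; omega) hF
        rw [hKcard] at hclique
        omega
    _ ≤ Fdeg (graphA l) F u + {H : (graphA l).Subgraph | Nonempty (H.coe ≃g F) ∧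
          u ∉ H.verts ∧ ∃ w, H.Adj u' w ∧ ¬ (graphA l).Adj u w}.ncard := by
        refine Nat.add_le_add_left (Set.ncard_le_ncard ?_ (Set.toFinite _)) _
        rintro H ⟨hHF, hHK, huv⟩
        refine ⟨hHF, fun hu => ?_, v, huv, ?_⟩
        · have := (hK u).mp (hHK hu)
          omega
        · simp [graphA_adj, v]
    _ ≤ Fdeg (graphA l) F u' :=
        Fdeg_add_ncard_le_Fdeg F fun w huw hw => graphA_adj_of_adj_pred hu' (by omega) huw hw

end GraphA

theorem Fdeg_strictly_increasing_general {W : Type*} [Fintype W] (F : SimpleGraph W)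
    (n l : ℕ) (hl : n < l) (hcard : Fintype.card W = n) (hdiam : F.diam = 2) :
    (∀ u u' : {v : ℕ // 1 ≤ v ∧ v ≤ 2 * l - 1}, 1 ≤ u.val → u.val ≤ l - 1 →
        u'.val = u.val + 1 →
        Fdeg (graphA l) F u + Nat.choose (l - 2) (n - 2) ≤ Fdeg (graphA l) F u') ∧
      (∀ u u' : {v : ℕ // 1 ≤ v ∧ v ≤ 2 * l - 1}, u.val < u'.val → u'.val ≤ l →
        Fdeg (graphA l) F u < Fdeg (graphA l) F u') := by
  obtain ⟨a₀, b₀, hF⟩ := (ne_bot_iff_exists_adj (G := F)).mp fun h => by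
    rw [h, diam_bot] at hdiam
    omega
  have hstep (u u' : {v : ℕ // 1 ≤ v ∧ v ≤ 2 * l - 1}) (hul : u.val ≤ l - 1)
      (hu' : u'.val = u.val + 1) :
      Fdeg (graphA l) F u + Nat.choose (l - 2) (n - 2) ≤ Fdeg (graphA l) F u' :=
    hcard ▸ Fdeg_graphA_add_choose_le F hF u u' hul hu'
  refine ⟨fun u u' _ => hstep u u', fun u u' huu' hu'l => ?_⟩
  let z : ℕ → ℕ := fun i =>
    if h : 1 ≤ i ∧ i ≤ 2 * l - 1 then Fdeg (graphA l) F ⟨i, h⟩ else 0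
  have hz : StrictMonoOn z (Set.Icc 1 l) := by
    refine strictMonoOn_of_lt_add_one Set.ordConnected_Icc fun i _ hi hi' => ?_
    have hchoose := Nat.choose_pos (show n - 2 ≤ l - 2 by omega)
    rw [Set.mem_Icc] at hi hi'
    simp only [z, dif_pos (show 1 ≤ i ∧ i ≤ 2 * l - 1 by omega),
      dif_pos (show 1 ≤ i + 1 ∧ i + 1 ≤ 2 * l - 1 by omega)]
    have := hstep ⟨i, by omega, by omega⟩ ⟨i + 1, by omega, by omega⟩
      (show i ≤ l - 1 by omega) rfl
    omega
  simpa [z, u.2, u'.2] using hz ⟨u.2.1, by omega⟩ ⟨u'.2.1, hu'l⟩ huu'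

theorem Fdeg_strictly_increasing {W : Type*} [Fintype W] (F : SimpleGraph W)
    (n l : ℕ) (hn : 3 ≤ n) (hl : n < l) (hcard : Fintype.card W = n) (hdiam : F.diam = 2) :
    (∀ u u' : {v : ℕ // 1 ≤ v ∧ v ≤ 2 * l - 1}, 1 ≤ u.val → u.val ≤ l - 1 →
        u'.val = u.val + 1 →
        Fdeg (graphA l) F u + Nat.choose (l - 2) (n - 2) ≤ Fdeg (graphA l) F u') ∧
      (∀ u u' : {v : ℕ // 1 ≤ v ∧ v ≤ 2 * l - 1}, u.val < u'.val → u'.val ≤ l →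
        Fdeg (graphA l) F u < Fdeg (graphA l) F u') :=
  Fdeg_strictly_increasing_general F n l hl hcard hdiam
end
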